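/- Let r ≥ 5 with r ∉ {6, 10}, let q be a primitive r-th root of unity, and suppose π: B₃ → U(2) is a homomorphism from the braid group B₃ such that each π(g_i) = q e_i - (1 - e_i) for nontrivial orthogonal projections e_i, and π(g₁), π(g₂) do not commute modulo scalars. Then the image of B₃ in PU(2) is infinite. -/

import Mathlib

/-!
Write `u = q e - (1 - e)` and `v = q f - (1 - f)` with rank-one projections `e ≠ f`. Since
`e M e = tr (e M) e` for a rank-one `e`, the braid relation reduces to
`(q + 1) ((q + 1)² tr (e f) - q) (e - f) = 0`, so `(q + 1)² tr (e f) = q`. Then `w = u v⁻¹` has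
determinant `1` and trace `1 - q - q⁻¹`. If the image in `PU(2)` were finite, some power of `w`
would be scalar, so an eigenvalue `z` of `w` would be a root of unity with
`z + z⁻¹ + q + q⁻¹ = 1`. This relation survives Galois conjugation, and because `r ≥ 5` and
`r ∉ {6, 10}` some conjugate of `q` has real part `< -1/2`; taking real parts, the matching
conjugate of `z` would have real part `> 1`, which is absurd.
-/

open Matrix Polynomial

section Hecke

variable {R A : Type*} [CommRing R] [Ring A] [Algebra R A]

/-- Acts as `q` on the range of the idempotent `e` and as `-1` on its kernel: the image
`q e - (1 - e)` of a braid generator. -/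
def heckeGen (q : R) (e : A) : A := q • e - (1 - e)

theorem heckeGen_eq (q : R) (e : A) : heckeGen q e = (q + 1) • e - 1 := by
  rw [heckeGen, add_smul, one_smul]; abel

theorem heckeGen_mul_heckeGen {q q' : R} (hq : q * q' = 1) {e : A} (he : IsIdempotentElem e) :
    heckeGen q e * heckeGen q' e = 1 := by
  simp only [heckeGen, sub_mul, mul_sub, smul_mul_assoc, mul_smul_comm, one_mul, mul_one, he.eq]
  linear_combination (norm := module) hq • e

theorem heckeGen_braid_sub (q t : R) {e f : A} (he : IsIdempotentElem e) (hf : IsIdempotentElem f)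
    (hefe : e * f * e = t • e) (hfef : f * e * f = t • f) :
    heckeGen q e * heckeGen q f * heckeGen q e - heckeGen q f * heckeGen q e * heckeGen q f =
      ((q + 1) * ((q + 1) ^ 2 * t - q)) • (e - f) := by
  simp only [heckeGen_eq, sub_mul, mul_sub, smul_mul_assoc, mul_smul_comm, one_mul, mul_one,
    smul_smul, he.eq, hf.eq, hefe, hfef, smul_sub]
  module

end Hecke

namespace Matrix

section CommRing

variable {R : Type*} [CommRing R]

theorem mul_self_fin_two (M : Matrix (Fin 2) (Fin 2) R) :
    M * M = M.trace • M - M.det • 1 := by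
  ext i j
  fin_cases i <;> fin_cases j <;> simp [mul_apply, trace_fin_two, det_fin_two] <;> ring

theorem mul_mul_eq_trace_smul_of_det_eq_zero {e : Matrix (Fin 2) (Fin 2) R} (he : e.det = 0)
    (M : Matrix (Fin 2) (Fin 2) R) : e * M * e = (e * M).trace • e := by
  rw [det_fin_two] at he
  ext i j
  fin_cases i <;> fin_cases j <;>
    simp only [Fin.zero_eta, Fin.mk_one, Fin.isValue, mul_apply, Fin.sum_univ_two, trace_fin_two,
      smul_apply, smul_eq_mul]
  · linear_combination -(M 1 1) * he
  · linear_combination (M 0 1) * he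
  · linear_combination (M 1 0) * he
  · linear_combination -(M 0 0) * he

theorem det_heckeGen {e : Matrix (Fin 2) (Fin 2) R} (htr : e.trace = 1) (hdet : e.det = 0)
    (q : R) : (heckeGen q e).det = -q := by
  rw [trace_fin_two] at htr
  rw [det_fin_two] at hdet ⊢
  simp only [heckeGen, Fin.isValue, sub_apply, smul_apply, smul_eq_mul, one_apply_eq,
    one_apply_ne zero_ne_one, one_apply_ne one_ne_zero, zero_sub, sub_neg_eq_add]
  linear_combination (q + 1) ^ 2 * hdet - (q + 1) * htr

theorem trace_heckeGen_mul_heckeGen {e f : Matrix (Fin 2) (Fin 2) R} (he : e.trace = 1)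
    (hf : f.trace = 1) (q q' : R) :
    (heckeGen q e * heckeGen q' f).trace = (q + 1) * (q' + 1) * (e * f).trace - q - q' := by
  simp only [heckeGen_eq, sub_mul, mul_sub, smul_mul_assoc, mul_smul_comm, one_mul, mul_one,
    trace_sub, trace_smul, trace_one, he, hf, Fintype.card_fin, smul_eq_mul]
  push_cast
  ring

end CommRing

section Field

variable {K : Type*} [Field K]

theorem IsIdempotentElem.trace_eq_one_and_det_eq_zero {e : Matrix (Fin 2) (Fin 2) K}
    (he : IsIdempotentElem e) (h0 : e ≠ 0) (h1 : e ≠ 1) : e.trace = 1 ∧ e.det = 0 := by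
  have hdet : e.det = 0 := by
    have hsq : e.det * (e.det - 1) = 0 := by
      linear_combination (det_mul e e).symm.trans (congrArg det he.eq)
    refine (mul_eq_zero.mp hsq).resolve_right fun h => h1 ?_
    have hunit : IsUnit e := (isUnit_iff_isUnit_det e).mpr (by simp [sub_eq_zero.mp h])
    exact (IsIdempotentElem.iff_eq_one_of_isUnit hunit).mp he
  refine ⟨?_, hdet⟩
  have hsmul : (1 - e.trace) • e = 0 := by
    rw [sub_smul, one_smul, sub_eq_zero]
    simpa [he.eq, hdet] using mul_self_fin_two e
  exact (sub_eq_zero.mp ((smul_eq_zero.mp hsmul).resolve_right h0)).symm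

theorem trace_mul_eq_of_braid {q : K} (hq : q ≠ -1) {e f : Matrix (Fin 2) (Fin 2) K}
    (he : IsIdempotentElem e) (hf : IsIdempotentElem f) (hdete : e.det = 0) (hdetf : f.det = 0)
    (hef : e ≠ f) (hbraid : heckeGen q e * heckeGen q f * heckeGen q e =
      heckeGen q f * heckeGen q e * heckeGen q f) :
    (q + 1) ^ 2 * (e * f).trace = q := by
  have hdefect := heckeGen_braid_sub q (e * f).trace he hf
    (mul_mul_eq_trace_smul_of_det_eq_zero hdete f)
    (by rw [mul_mul_eq_trace_smul_of_det_eq_zero hdetf e, trace_mul_comm])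
  rw [hbraid, sub_self, eq_comm, smul_eq_zero] at hdefect
  have hq1 : q + 1 ≠ 0 := fun h => hq (eq_neg_of_add_eq_zero_left h)
  have := hdefect.resolve_right (sub_ne_zero.mpr hef)
  exact sub_eq_zero.mp ((mul_eq_zero.mp this).resolve_left hq1)

theorem trace_heckeGen_mul_heckeGen_inv_of_braid {q : K} (hq0 : q ≠ 0) (hq1 : q ≠ -1)
    {e f : Matrix (Fin 2) (Fin 2) K} (he : IsIdempotentElem e) (he0 : e ≠ 0) (he1 : e ≠ 1)
    (hf : IsIdempotentElem f) (hf0 : f ≠ 0) (hf1 : f ≠ 1) (hef : e ≠ f)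
    (hbraid : heckeGen q e * heckeGen q f * heckeGen q e =
      heckeGen q f * heckeGen q e * heckeGen q f) :
    (heckeGen q e * heckeGen q⁻¹ f).trace = 1 - q - q⁻¹ ∧
      (heckeGen q e * heckeGen q⁻¹ f).det = 1 := by
  obtain ⟨htre, hdete⟩ := IsIdempotentElem.trace_eq_one_and_det_eq_zero he he0 he1
  obtain ⟨htrf, hdetf⟩ := IsIdempotentElem.trace_eq_one_and_det_eq_zero hf hf0 hf1
  have ht := trace_mul_eq_of_braid hq1 he hf hdete hdetf hef hbraid
  constructor
  · rw [trace_heckeGen_mul_heckeGen htre htrf]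
    field_simp
    linear_combination ht
  · rw [det_mul, det_heckeGen htre hdete, det_heckeGen htrf hdetf, neg_mul_neg,
      mul_inv_cancel₀ hq0]

theorem exists_pow_eq_one_add_inv_eq_trace [IsAlgClosed K] {W : Matrix (Fin 2) (Fin 2) K}
    (hdet : W.det = 1) {n : ℕ} {c : K} (hc : W ^ n = c • 1) :
    ∃ z : K, z ^ (2 * n) = 1 ∧ z + z⁻¹ = W.trace := by
  obtain ⟨z, hz⟩ := spectrum.nonempty_of_isAlgClosed_of_finiteDimensional K W
  have hroot : z ^ 2 - W.trace * z + 1 = 0 := by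
    simpa [charpoly_fin_two, hdet] using mem_spectrum_iff_isRoot_charpoly.mp hz
  have hz0 : z ≠ 0 := by rintro rfl; simp at hroot
  have hzc : z ^ n = c := by
    have := spectrum.pow_mem_pow W n hz
    rwa [hc, ← Algebra.algebraMap_eq_smul_one, spectrum.scalar_eq, Set.mem_singleton_iff] at this
  have hc2 : c ^ 2 = 1 := by
    simpa [det_pow, hdet] using (congrArg det hc).symm
  refine ⟨z, by rw [pow_mul', hzc, hc2], ?_⟩
  field_simp
  linear_combination hroot

end Field

theorem UnitaryGroup.exists_eq_smul_one_of_mem_center {K : Type*} [Field K] [StarRing K]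
    [CharZero K] {A : unitaryGroup (Fin 2) K}
    (hA : A ∈ Subgroup.center (unitaryGroup (Fin 2) K)) :
    ∃ c : K, (A : Matrix (Fin 2) (Fin 2) K) = c • 1 := by
  have hD : !![(1 : K), 0; 0, -1] ∈ unitaryGroup (Fin 2) K := by
    rw [mem_unitaryGroup_iff, star_eq_conjTranspose]
    ext i j
    fin_cases i <;> fin_cases j <;> simp [conjTranspose_apply, Matrix.mul_apply, Fin.sum_univ_two]
  have hS : !![(0 : K), 1; 1, 0] ∈ unitaryGroup (Fin 2) K := by
    rw [mem_unitaryGroup_iff, star_eq_conjTranspose]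
    ext i j
    fin_cases i <;> fin_cases j <;> simp [conjTranspose_apply, Matrix.mul_apply, Fin.sum_univ_two]
  have hAD := congrArg Subtype.val (Subgroup.mem_center_iff.mp hA ⟨_, hD⟩)
  have hAS := congrArg Subtype.val (Subgroup.mem_center_iff.mp hA ⟨_, hS⟩)
  obtain ⟨a, b, c, d, hM⟩ : ∃ a b c d, (A : Matrix (Fin 2) (Fin 2) K) = !![a, b; c, d] :=
    ⟨_, _, _, _, eta_fin_two _⟩
  simp only [Submonoid.coe_mul, hM, mul_fin_two] at hAD hAS
  have hb := congrFun₂ hAD 0 1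
  have hc := congrFun₂ hAD 1 0
  have hd := congrFun₂ hAS 0 1
  simp only [of_apply, cons_val', cons_val_zero, cons_val_one, empty_val', cons_val_fin_one,
    one_mul, zero_mul, mul_one, mul_zero, add_zero, zero_add, mul_neg, neg_mul] at hb hc hd
  refine ⟨a, ?_⟩
  rw [hM, CharZero.eq_neg_self_iff.mp hb, CharZero.eq_neg_self_iff.mp hc.symm, hd]
  ext i j; fin_cases i <;> fin_cases j <;> simp

end Matrix

theorem Subgroup.exists_pow_mem_of_finite_map_mk' {G : Type*} [Group G] {N : Subgroup G}
    [N.Normal] {H : Subgroup G} [Finite (H.map (QuotientGroup.mk' N))] {g : G} (hg : g ∈ H) :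
    ∃ n, 0 < n ∧ g ^ n ∈ N := by
  let x : H.map (QuotientGroup.mk' N) := ⟨QuotientGroup.mk' N g, mem_map_of_mem _ hg⟩
  refine ⟨orderOf x, orderOf_pos x, ?_⟩
  rw [← QuotientGroup.eq_one_iff, QuotientGroup.mk_pow]
  exact congrArg Subtype.val (pow_orderOf_eq_one x)

theorem Nat.exists_coprime_gt_third_lt_half {r : ℕ} (hr : 5 ≤ r) (hr6 : r ≠ 6) (hr10 : r ≠ 10) :
    ∃ k, k.Coprime r ∧ r < 3 * k ∧ 2 * k < r := by
  suffices ∃ k d, r = 2 * k + d ∧ 0 < d ∧ d < k ∧ k.Coprime d by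
    obtain ⟨k, d, rfl, hd0, hdk, hkd⟩ := this
    exact ⟨k, (Nat.coprime_mul_right_add_right k d 2).mpr hkd, by omega, by omega⟩
  rcases Nat.even_or_odd r with ⟨j, rfl⟩ | ⟨j, rfl⟩
  · rcases Nat.even_or_odd j with ⟨i, rfl⟩ | ⟨i, rfl⟩
    · have hodd : (2 * i - 1).Coprime 2 := Nat.coprime_two_right.mpr ⟨i - 1, by omega⟩
      exact ⟨2 * i - 1, 2, by omega, by omega, by omega, hodd⟩
    · have hodd : (2 * i - 1).Coprime 2 := Nat.coprime_two_right.mpr ⟨i - 1, by omega⟩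
      exact ⟨2 * i - 1, 4, by omega, by omega, by omega, by simpa using hodd.pow_right 2⟩
  · exact ⟨j, 1, by omega, by omega, by omega, Nat.coprime_one_right j⟩

open Real in
theorem Real.cos_two_pi_mul_div_lt_neg_half {k r : ℕ} (h3 : r < 3 * k) (h2 : 2 * k < r) :
    cos (2 * π * k / r) < -(1 / 2) := by
  have hr : (0 : ℝ) < r := by exact_mod_cast (by omega : 0 < r)
  have h3' : (r : ℝ) < 3 * k := by exact_mod_cast h3
  have h2' : 2 * (k : ℝ) < r := by exact_mod_cast h2
  have hlo : 2 * π / 3 < 2 * π * k / r := by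
    rw [div_lt_div_iff₀ (by norm_num) hr]; nlinarith [pi_pos]
  have hhi : 2 * π * k / r ≤ π := by
    rw [div_le_iff₀ hr]; nlinarith [pi_pos]
  calc cos (2 * π * k / r) < cos (2 * π / 3) :=
        strictAntiOn_cos ⟨by positivity, by linarith [pi_pos]⟩ ⟨by positivity, hhi⟩ hlo
    _ = -(1 / 2) := by
        rw [show 2 * π / 3 = π - π / 3 by ring, cos_pi_sub, cos_pi_div_three]

theorem IsPrimitiveRoot.exists_coprime_re_pow_lt_neg_half {q : ℂ} {r : ℕ}
    (hq : IsPrimitiveRoot q r) (hr : 5 ≤ r) (hr6 : r ≠ 6) (hr10 : r ≠ 10) :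
    ∃ m, m.Coprime r ∧ (q ^ m).re < -(1 / 2) := by
  obtain ⟨k, hk, h3, h2⟩ := Nat.exists_coprime_gt_third_lt_half hr hr6 hr10
  have : NeZero r := ⟨by omega⟩
  have hζ := Complex.isPrimitiveRoot_exp_of_coprime k r (by omega) hk
  obtain ⟨m, -, hm⟩ := hq.eq_pow_of_pow_eq_one hζ.pow_eq_one
  refine ⟨m, (hq.pow_iff_coprime (by omega) m).mp (hm ▸ hζ), ?_⟩
  have harg : 2 * Real.pi * Complex.I * (k / r) = ((2 * Real.pi * k / r : ℝ) : ℂ) * Complex.I :=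
    by push_cast; ring
  rw [hm, harg, Complex.exp_ofReal_mul_I_re]
  exact Real.cos_two_pi_mul_div_lt_neg_half h3 h2

theorem Nat.exists_coprime_modEq_of_dvd {r N m : ℕ} (hrN : r ∣ N) (hN : N ≠ 0)
    (hm : m.Coprime r) : ∃ K, K.Coprime N ∧ K ≡ m [MOD r] := by
  have : NeZero N := ⟨hN⟩
  obtain ⟨U, hU⟩ := ZMod.unitsMap_surjective hrN (ZMod.unitOfCoprime m hm)
  refine ⟨(U : ZMod N).val, ZMod.val_coe_unit_coprime U, ?_⟩
  rw [← ZMod.natCast_eq_natCast_iff]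
  have := congrArg ((↑) : (ZMod r)ˣ → ZMod r) hU
  simpa [ZMod.unitsMap_def] using this

theorem IsPrimitiveRoot.aeval_pow_eq_zero_of_coprime {K : Type*} [Field K] [CharZero K] {ζ : K}
    {N : ℕ} (hζ : IsPrimitiveRoot ζ N) {k : ℕ} (hk : k.Coprime N) {P : ℚ[X]}
    (hP : aeval ζ P = 0) : aeval (ζ ^ k) P = 0 := by
  rcases Nat.eq_zero_or_pos N with rfl | hN
  · rwa [(Nat.coprime_zero_right _).mp hk, pow_one]
  rw [← minpoly.dvd_iff, ← cyclotomic_eq_minpoly_rat (hζ.pow_of_coprime k hk) hN,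
    cyclotomic_eq_minpoly_rat hζ hN]
  exact minpoly.dvd ℚ ζ hP

theorem Complex.neg_half_le_re_of_add_inv_add_add_inv_eq_one {x y : ℂ} (hx : ‖x‖ = 1)
    (hy : ‖y‖ = 1) (h : x + x⁻¹ + y + y⁻¹ = 1) : -(1 / 2) ≤ y.re := by
  have hre : ∀ z : ℂ, ‖z‖ = 1 → z⁻¹.re = z.re := fun z hz => by
    rw [inv_re, normSq_eq_norm_sq, hz]; simp
  have := congrArg re h
  simp only [add_re, one_re, hre x hx, hre y hy] at this
  linarith [(re_le_norm x).trans hx.le]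

theorem IsPrimitiveRoot.add_inv_add_add_inv_pow_eq_one {K : Type*} [Field K] [CharZero K]
    {ζ : K} {N : ℕ} (hζ : IsPrimitiveRoot ζ N) {x y : K} (hx : x ^ N = 1) (hy : y ^ N = 1)
    {k : ℕ} (hk : k.Coprime N) (h : x + x⁻¹ + y + y⁻¹ = 1) :
    x ^ k + (x ^ k)⁻¹ + y ^ k + (y ^ k)⁻¹ = 1 := by
  rcases Nat.eq_zero_or_pos N with rfl | hN
  · simpa [(Nat.coprime_zero_right _).mp hk] using h
  have : NeZero N := ⟨hN.ne'⟩
  obtain ⟨a, ha, rfl⟩ := hζ.eq_pow_of_pow_eq_one hx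
  obtain ⟨b, hb, rfl⟩ := hζ.eq_pow_of_pow_eq_one hy
  have hinv : ∀ c ≤ N, ζ ^ (N - c) = (ζ ^ c)⁻¹ := fun c hc => by
    rw [pow_sub₀ _ (hζ.ne_zero hN.ne') hc, hζ.pow_eq_one, one_mul]
  -- `x⁻¹ = ζ ^ (N - a)` turns the relation into a rational polynomial equation for `ζ`
  let P : ℚ[X] := X ^ a + X ^ (N - a) + X ^ b + X ^ (N - b) - 1
  have hP : aeval ζ P = 0 := by
    simp only [P, map_sub, map_add, map_pow, aeval_X, map_one, hinv a ha.le, hinv b hb.le, h,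
      sub_self]
  have hPk := hζ.aeval_pow_eq_zero_of_coprime hk hP
  simp only [P, map_sub, map_add, map_pow, aeval_X, map_one] at hPk
  rw [pow_right_comm ζ k a, pow_right_comm ζ k (N - a), pow_right_comm ζ k b,
    pow_right_comm ζ k (N - b), hinv a ha.le, hinv b hb.le, inv_pow, inv_pow] at hPk
  exact sub_eq_zero.mp hPk

theorem IsPrimitiveRoot.ne_neg_one {K : Type*} [CommRing K] [IsDomain K] {q : K} {r : ℕ}
    (hq : IsPrimitiveRoot q r) (hr : 2 < r) : q ≠ -1 := by
  rintro rfl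
  have := Nat.le_of_dvd two_pos (hq.dvd_of_pow_eq_one 2 (by norm_num))
  omega

theorem add_inv_add_add_inv_ne_one {r : ℕ} (hr : 5 ≤ r) (hr6 : r ≠ 6) (hr10 : r ≠ 10) {q : ℂ}
    (hq : IsPrimitiveRoot q r) {z : ℂ} {n : ℕ} (hn : n ≠ 0) (hz : z ^ n = 1) :
    z + z⁻¹ + q + q⁻¹ ≠ 1 := by
  intro h
  obtain ⟨m, hm, hqm⟩ := hq.exists_coprime_re_pow_lt_neg_half hr hr6 hr10
  have hN : r * n ≠ 0 := mul_ne_zero (by omega) hn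
  obtain ⟨k, hk, hkm⟩ := Nat.exists_coprime_modEq_of_dvd (dvd_mul_right r n) hN hm
  have hqk : q ^ k = q ^ m := by
    rw [← pow_mod_orderOf q k, ← pow_mod_orderOf q m, ← hq.eq_orderOf]
    exact congrArg (q ^ ·) hkm
  have hconj := (Complex.isPrimitiveRoot_exp _ hN).add_inv_add_add_inv_pow_eq_one
    (by rw [mul_comm, pow_mul, hz, one_pow]) (by rw [pow_mul, hq.pow_eq_one, one_pow]) hk h
  rw [hqk] at hconj
  have hnorm : ∀ w : ℂ, ∀ j ≠ 0, w ^ j = 1 → ∀ i, ‖w ^ i‖ = 1 := fun w j hj hw i => by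
    rw [norm_pow, Complex.norm_eq_one_of_pow_eq_one hw hj, one_pow]
  linarith [Complex.neg_half_le_re_of_add_inv_add_add_inv_eq_one (hnorm z n hn hz k)
    (hnorm q r (by omega) hq.pow_eq_one m) hconj]

/-- a homomorphism `B₃ → U(2)` (given by two unitaries `u, v` satisfying the
braid relation) whose generators are of the form `q•e - (1-e)` for nontrivial orthogonal
projections `e` (`q` a primitive `r`-th root of unity, `r ≥ 5`, `r ∉ {6,10}`), and which
do not commute modulo scalars, has infinite image in `PU(2) = U(2)/center`. -/
theorem braid_group_infinite_image_PU2 (r : ℕ) (hr : 5 ≤ r) (hr6 : r ≠ 6) (hr10 : r ≠ 10)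
    (q : ℂ) (hq : IsPrimitiveRoot q r)
    (u v : Matrix.unitaryGroup (Fin 2) ℂ)
    (hbraid : u * v * u = v * u * v)
    (hu : ∃ e : Matrix (Fin 2) (Fin 2) ℂ, e * e = e ∧ e.conjTranspose = e ∧
      e ≠ 0 ∧ e ≠ 1 ∧ (u : Matrix (Fin 2) (Fin 2) ℂ) = q • e - (1 - e))
    (hv : ∃ e : Matrix (Fin 2) (Fin 2) ℂ, e * e = e ∧ e.conjTranspose = e ∧
      e ≠ 0 ∧ e ≠ 1 ∧ (v : Matrix (Fin 2) (Fin 2) ℂ) = q • e - (1 - e))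
    (hcomm : ¬ ∃ c : ℂ, ((u * v : Matrix.unitaryGroup (Fin 2) ℂ) : Matrix (Fin 2) (Fin 2) ℂ)
      = c • ((v * u : Matrix.unitaryGroup (Fin 2) ℂ) : Matrix (Fin 2) (Fin 2) ℂ)) :
    Infinite ((Subgroup.closure {u, v}).map
      (QuotientGroup.mk' (Subgroup.center (Matrix.unitaryGroup (Fin 2) ℂ)))) := by
  obtain ⟨e, he, -, he0, he1, hue : (u : Matrix (Fin 2) (Fin 2) ℂ) = heckeGen q e⟩ := hu
  obtain ⟨f, hf, -, hf0, hf1, hvf : (v : Matrix (Fin 2) (Fin 2) ℂ) = heckeGen q f⟩ := hv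
  have hq0 : q ≠ 0 := hq.ne_zero (by omega)
  have hef : e ≠ f := by
    rintro rfl
    exact hcomm ⟨1, by rw [one_smul, Subtype.ext (hue.trans hvf.symm)]⟩
  obtain ⟨htrW, hdetW⟩ := trace_heckeGen_mul_heckeGen_inv_of_braid hq0 (hq.ne_neg_one (by omega))
    he he0 he1 hf hf0 hf1 hef
    (by simpa only [Submonoid.coe_mul, hue, hvf] using congrArg Subtype.val hbraid)
  have hvinv : ((v⁻¹ : unitaryGroup (Fin 2) ℂ) : Matrix (Fin 2) (Fin 2) ℂ) = heckeGen q⁻¹ f :=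
    left_inv_eq_right_inv (by rw [← Submonoid.coe_mul, inv_mul_cancel]; rfl)
      (hvf ▸ heckeGen_mul_heckeGen (mul_inv_cancel₀ hq0) hf)
  rw [← not_finite_iff_infinite]
  intro hfin
  obtain ⟨n, hn, hcen⟩ := Subgroup.exists_pow_mem_of_finite_map_mk' (N := Subgroup.center _)
    (mul_mem (Subgroup.subset_closure (Set.mem_insert u {v}))
      (inv_mem (Subgroup.subset_closure (Set.mem_insert_of_mem u rfl))))
  obtain ⟨c, hc⟩ := UnitaryGroup.exists_eq_smul_one_of_mem_center hcen
  obtain ⟨z, hz, hztr⟩ := exists_pow_eq_one_add_inv_eq_trace hdetW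
    (by rwa [SubmonoidClass.coe_pow, Submonoid.coe_mul, hue, hvinv] at hc)
  exact add_inv_add_add_inv_ne_one hr hr6 hr10 hq (by omega) hz
    (by linear_combination hztr + htrW)
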